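/- arXiv:1310.1303 — 5 statements merged into one kernel-verified Lean document; each statement's English description precedes it below -/
import Mathlib

section
/- Let c_{k,n} denote the coefficient of x^n in the power series (∑_{i≥1} x^i/i)^k. Then 0 ≤ c_{k,n} ≤ (2e)^n · k!/n^k for all positive integers k, n. -/
/-!
The coefficients `a_i` of `∑ x^i/i` lie in `[0, 1]` and `a_0 = 0`, so
`c_{k+1,n} = ∑_{j<n} c_{k,j} a_{n-j} ≤ ∑_{j<n} c_{k,j}`, and induction on `k` gives
`c_{k,n} ≤ ∑_{j<n} 2^j < 2^n`. The remaining factor `e^n k!/n^k` is at least `1` because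
`n^k/k!` is one term of the exponential series of `e^n`.
-/

open Finset PowerSeries

section OrderedSemiring

variable {R : Type*} [CommSemiring R] [PartialOrder R] [IsOrderedRing R] {f : R⟦X⟧}

theorem PowerSeries.coeff_pow_nonneg (hf : ∀ i, 0 ≤ coeff i f) (k n : ℕ) :
    0 ≤ coeff n (f ^ k) := by
  rw [coeff_pow]
  exact sum_nonneg fun l _ => prod_nonneg fun i _ => hf _

theorem PowerSeries.coeff_pow_le_two_pow (hf₀ : ∀ i, 0 ≤ coeff i f) (hf₁ : ∀ i, coeff i f ≤ 1)
    (hf : constantCoeff f = 0) (k n : ℕ) : coeff n (f ^ k) ≤ 2 ^ n := by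
  induction k generalizing n with
  | zero =>
    rw [pow_zero, coeff_one]
    split_ifs
    · exact one_le_pow₀ one_le_two
    · exact pow_nonneg zero_le_two n
  | succ k ih =>
    have hgeom : ∑ j ∈ range n, (2 : R) ^ j + 1 = 2 ^ n := by
      simpa [one_add_one_eq_two] using geom_sum_mul_add (1 : R) n
    -- the term `j = n` vanishes as `f` has no constant term; every other term is at most `2 ^ j`
    calc coeff n (f ^ (k + 1))
        = ∑ j ∈ range n, coeff j (f ^ k) * coeff (n - j) f := by
          rw [pow_succ, coeff_mul, Nat.sum_antidiagonal_eq_sum_range_succ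
            (fun i j => coeff i (f ^ k) * coeff j f), sum_range_succ, Nat.sub_self,
            coeff_zero_eq_constantCoeff_apply, hf, mul_zero, add_zero]
      _ ≤ ∑ j ∈ range n, (2 : R) ^ j := by
          gcongr with j
          calc coeff j (f ^ k) * coeff (n - j) f ≤ coeff j (f ^ k) * 1 := by
                gcongr
                · exact coeff_pow_nonneg hf₀ k j
                · exact hf₁ _
            _ ≤ 2 ^ j := by rw [mul_one]; exact ih j
      _ ≤ 2 ^ n := by rw [← hgeom]; exact le_add_of_nonneg_right zero_le_one

end OrderedSemiring

theorem Real.pow_le_exp_mul_factorial {x : ℝ} (hx : 0 ≤ x) (k : ℕ) :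
    x ^ k ≤ Real.exp x * k.factorial :=
  (div_le_iff₀ (by positivity)).1 (Real.pow_div_factorial_le_exp x hx k)

theorem coeff_pow_log_series_bound_general (k n : ℕ) (hn : 0 < n) :
    0 ≤ PowerSeries.coeff n
        ((PowerSeries.mk fun i => if i = 0 then (0 : ℝ) else 1 / i) ^ k) ∧
    PowerSeries.coeff n
        ((PowerSeries.mk fun i => if i = 0 then (0 : ℝ) else 1 / i) ^ k)
      ≤ (2 * Real.exp 1) ^ n * (k.factorial : ℝ) / (n : ℝ) ^ k := by
  set f : ℝ⟦X⟧ := mk fun i => if i = 0 then (0 : ℝ) else 1 / i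
  have hf₀ : ∀ i, 0 ≤ coeff i f := fun i => by
    rw [coeff_mk]; split_ifs <;> positivity
  have hf₁ : ∀ i, coeff i f ≤ 1 := fun i => by
    rw [coeff_mk]; split_ifs with hi
    · exact zero_le_one
    · exact div_le_one_of_le₀ (Nat.one_le_cast.2 (Nat.one_le_iff_ne_zero.2 hi))
        (Nat.cast_nonneg i)
  have hf : constantCoeff f = 0 := by
    rw [← coeff_zero_eq_constantCoeff_apply, coeff_mk, if_pos rfl]
  refine ⟨coeff_pow_nonneg hf₀ k n, ?_⟩
  rw [le_div_iff₀ (by positivity), mul_pow, ← Real.exp_nat_mul, mul_one, mul_assoc]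
  exact mul_le_mul (coeff_pow_le_two_pow hf₀ hf₁ hf k n)
    (Real.pow_le_exp_mul_factorial (Nat.cast_nonneg n) k) (by positivity) (by positivity)

theorem coeff_pow_log_series_bound (k n : ℕ) (hk : 0 < k) (hn : 0 < n) :
    0 ≤ PowerSeries.coeff n
        ((PowerSeries.mk fun i => if i = 0 then (0 : ℝ) else 1 / i) ^ k) ∧
    PowerSeries.coeff n
        ((PowerSeries.mk fun i => if i = 0 then (0 : ℝ) else 1 / i) ^ k)
      ≤ (2 * Real.exp 1) ^ n * (k.factorial : ℝ) / (n : ℝ) ^ k :=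
  coeff_pow_log_series_bound_general k n hn
end

section
/- For all positive integers k and n, the sum over all k-tuples (i_1,…,i_k) of positive integers with i_1+⋯+i_k = n of the product 1/(i_1 · i_2 ⋯ i_k) is at most (2e)^n · k!/n^k. -/
/-! Every summand is at most `1`, and a positive `k`-tuple summing to `n` is determined by
the composition of `n` it lists, so the sum is at most the number `2 ^ (n - 1)` of compositions
of `n`. On the other side `n ^ k / k! ≤ exp n = e ^ n`, so the right-hand side is at least
`2 ^ n`. -/

open Finset

def Composition.ofPosTuple {k n : ℕ} (i : Fin k → ℕ) (hpos : ∀ j, 0 < i j)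
    (hsum : ∑ j, i j = n) : Composition n where
  blocks := List.ofFn i
  blocks_pos hx := by
    obtain ⟨j, rfl⟩ := List.mem_ofFn.mp hx
    exact hpos j
  blocks_sum := by rw [List.sum_ofFn, hsum]

theorem card_filter_antidiagonalTuple_pos_le (k n : ℕ) :
    #((Nat.antidiagonalTuple k n).filter (fun i => ∀ j, 0 < i j)) ≤ 2 ^ (n - 1) := by
  set S := (Nat.antidiagonalTuple k n).filter (fun i => ∀ j, 0 < i j)
  have hsum (i : S) : ∑ j, i.1 j = n := Nat.mem_antidiagonalTuple.mp (mem_filter.mp i.2).1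
  have hpos (i : S) : ∀ j, 0 < i.1 j := (mem_filter.mp i.2).2
  let toComposition (i : S) : Composition n := .ofPosTuple i.1 (hpos i) (hsum i)
  have hinj : Function.Injective toComposition := fun a b hab =>
    Subtype.ext (List.ofFn_injective (congrArg Composition.blocks hab))
  calc #S = Fintype.card S := (Fintype.card_coe S).symm
    _ ≤ Fintype.card (Composition n) := Fintype.card_le_of_injective _ hinj
    _ = 2 ^ (n - 1) := composition_card n

theorem prod_one_div_le_one {ι : Type*} (s : Finset ι) (i : ι → ℕ) (hpos : ∀ j ∈ s, 0 < i j) :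
    ∏ j ∈ s, (1 : ℝ) / i j ≤ 1 :=
  prod_le_one (fun _ _ => by positivity) fun j hj =>
    div_le_one_of_le₀ (by exact_mod_cast hpos j hj) (Nat.cast_nonneg _)

theorem pow_le_exp_one_pow_mul_factorial (n k : ℕ) :
    (n : ℝ) ^ k ≤ Real.exp 1 ^ n * k.factorial := by
  rw [Real.exp_one_pow, ← div_le_iff₀ (by positivity)]
  exact Real.pow_div_factorial_le_exp _ n.cast_nonneg k

theorem sum_compositions_bound_general (k n : ℕ) (hn : 0 < n) :
    ∑ i ∈ (Finset.Nat.antidiagonalTuple k n).filter (fun i => ∀ j, 0 < i j),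
        ∏ j, (1 : ℝ) / (i j : ℝ)
      ≤ (2 * Real.exp 1) ^ n * (k.factorial : ℝ) / (n : ℝ) ^ k := by
  set S := (Nat.antidiagonalTuple k n).filter (fun i => ∀ j, 0 < i j)
  have hsum_le_card : ∑ i ∈ S, ∏ j, (1 : ℝ) / i j ≤ #S :=
    sum_le_card_nsmul S _ 1 (fun i hi =>
      prod_one_div_le_one _ i fun j _ => (mem_filter.mp hi).2 j) |>.trans_eq (by simp)
  have hcard_le : (#S : ℝ) ≤ 2 ^ n := by
    exact_mod_cast (card_filter_antidiagonalTuple_pos_le k n).trans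
      (Nat.pow_le_pow_right two_pos (n.sub_le 1))
  have hpow_le : (2 : ℝ) ^ n ≤ (2 * Real.exp 1) ^ n * k.factorial / (n : ℝ) ^ k := by
    rw [le_div_iff₀ (by positivity), mul_pow, mul_assoc]
    gcongr
    exact pow_le_exp_one_pow_mul_factorial n k
  exact hsum_le_card.trans (hcard_le.trans hpow_le)

theorem sum_compositions_bound (k n : ℕ) (hk : 0 < k) (hn : 0 < n) :
    ∑ i ∈ (Finset.Nat.antidiagonalTuple k n).filter (fun i => ∀ j, 0 < i j),
        ∏ j, (1 : ℝ) / (i j : ℝ)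
      ≤ (2 * Real.exp 1) ^ n * (k.factorial : ℝ) / (n : ℝ) ^ k :=
  sum_compositions_bound_general k n hn
end

section
/- For every natural number m ≥ 1, m! > √(2πm) · m^m / e^m. -/
open Real Stirling Nat Filter Topology

lemma sqrt_pi_lt_stirlingSeq (m : ℕ) (hm : 1 ≤ m) : Real.sqrt Real.pi < stirlingSeq m := by
  obtain ⟨k, rfl⟩ := Nat.exists_eq_add_of_le hm
  have h1 : Real.sqrt Real.pi ≤ stirlingSeq (1 + k + 1) := by
    have ha : Tendsto (stirlingSeq ∘ Nat.succ) atTop (𝓝 (Real.sqrt Real.pi)) :=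
      Stirling.tendsto_stirlingSeq_sqrt_pi.comp (tendsto_add_atTop_nat 1)
    have := stirlingSeq'_antitone.le_of_tendsto ha (k + 1)
    simpa [Function.comp, show k + 1 + 1 = 1 + k + 1 by ring] using this
  have hs := log_stirlingSeq_diff_hasSum k
  have hpos : 0 < log (stirlingSeq (k + 1)) - log (stirlingSeq (k + 2)) := by
    refine hasSum_lt (i := 0) (fun i => by positivity) (by positivity) hasSum_zero hs
  have := (Real.log_lt_log_iff (stirlingSeq'_pos (k+1)) (stirlingSeq'_pos k)).mp (by linarith)
  rw [show 1 + k = k + 1 by ring]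
  rw [show 1 + k + 1 = k + 1 + 1 by ring] at h1
  linarith

theorem stirling_lower (m : ℕ) (hm : 1 ≤ m) :
    Real.sqrt (2 * Real.pi * m) * (m : ℝ) ^ m / Real.exp m < (m.factorial : ℝ) := by
  have h := sqrt_pi_lt_stirlingSeq m hm
  have hmp : (0:ℝ) < m := by exact_mod_cast hm
  have hden : 0 < Real.sqrt (2 * m) * ((m : ℝ) / Real.exp 1) ^ m := by positivity
  rw [stirlingSeq, lt_div_iff₀ hden] at h
  calc Real.sqrt (2 * Real.pi * m) * (m : ℝ) ^ m / Real.exp m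
      = Real.sqrt Real.pi * (Real.sqrt (2 * m) * ((m : ℝ) / Real.exp 1) ^ m) := by
        rw [show 2 * Real.pi * (m:ℝ) = Real.pi * (2 * m) by ring, Real.sqrt_mul Real.pi_pos.le,
          div_pow, ← Real.exp_nat_mul]
        field_simp
    _ < _ := h
end

section
/- Let p, k ≥ 1 be integers with p > 1, and for X, x > 0 set α_k(X,x) = (1/k!)(X^{1/p} - x^{1/p})^k, viewed as a function of X. Then for all natural numbers n and all x > 0, |∂^n_X α_k(X,x)|_{X=x}| ≤ (2e)^n · n^{n-k} · x^{-(pn-k)/p}. -/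
/-!
Write `g X = X ^ (1/p) - x ^ (1/p)`. Since `0 < 1/p ≤ 1`, the falling factorial
`(1/p)(1/p - 1)⋯(1/p - i)` has absolute value at most `i!`, so `|g⁽ⁱ⁺¹⁾(x)| ≤ i! x^(1/p) x^-(i+1)`,
and `g x = 0`. Expanding `g^(j+1) = g · g^j` by Leibniz, the term without a derivative on `g`
vanishes, and induction on `k` with the hockey-stick identity gives
`|(g^k)⁽ⁿ⁾(x)| ≤ n! C(n,k) x^(k/p) x^-n`. Finally `n!/k! ≤ n^(n-k)` and `C(n,k) ≤ 2^n ≤ (2e)^n`.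
-/

open Nat Finset Polynomial
open scoped ContDiff

theorem sum_range_choose_eq_choose_succ (k n : ℕ) :
    ∑ m ∈ range n, m.choose k = n.choose (k + 1) := by
  induction n with
  | zero => simp
  | succ n ih => rw [sum_range_succ, ih, choose_succ_succ', add_comm]

theorem sum_range_choose_sub_eq_choose_succ (k n : ℕ) :
    ∑ i ∈ range n, (n - (i + 1)).choose k = n.choose (k + 1) := by
  rw [← sum_range_choose_eq_choose_succ, ← sum_range_reflect (fun m => m.choose k) n]
  exact sum_congr rfl fun i _ => by rw [Nat.sub_sub, add_comm 1]

theorem choose_succ_mul_factorial_mul_factorial_le {n i : ℕ} (hi : i + 1 ≤ n) :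
    n.choose (i + 1) * i ! * (n - (i + 1))! ≤ n ! := by
  rw [← choose_mul_factorial_mul_factorial hi, factorial_succ]
  gcongr
  exact Nat.le_mul_of_pos_left _ i.succ_pos

section

variable {𝕜 𝔸 : Type*} [NontriviallyNormedField 𝕜] [NormedRing 𝔸] [NormOneClass 𝔸]
  [NormedAlgebra 𝕜 𝔸]

theorem norm_iteratedDeriv_pow_le {g : 𝕜 → 𝔸} {x : 𝕜} (hg : ContDiffAt 𝕜 ∞ g x) (hgx : g x = 0)
    {A B : ℝ} (hA : 0 ≤ A) (hB : 0 ≤ B)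
    (hder : ∀ i, ‖iteratedDeriv (i + 1) g x‖ ≤ i ! * A * B ^ (i + 1)) (k m : ℕ) :
    ‖iteratedDeriv m (fun y => g y ^ k) x‖ ≤ m ! * m.choose k * A ^ k * B ^ m := by
  induction k generalizing m with
  | zero =>
    rcases m.eq_zero_or_pos with rfl | hm
    · simp
    · simp [iteratedDeriv_const, hm.ne']
      positivity
  | succ j ih =>
    have hleib : iteratedDeriv m (fun y => g y ^ (j + 1)) x = ∑ i ∈ range m,
        (m.choose (i + 1) : 𝔸) * iteratedDeriv (i + 1) g x *
          iteratedDeriv (m - (i + 1)) (fun y => g y ^ j) x := by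
      rw [show (fun y => g y ^ (j + 1)) = fun y => g y * g y ^ j from funext fun y => pow_succ' _ _,
        iteratedDeriv_fun_mul (hg.of_le (by exact_mod_cast le_top))
        ((hg.pow j).of_le (by exact_mod_cast le_top)), sum_range_succ']
      simp [hgx]
    rw [hleib]
    calc _ ≤ ∑ i ∈ range m, (m.choose (i + 1) : ℝ) * (i ! * A * B ^ (i + 1)) *
          ((m - (i + 1))! * (m - (i + 1)).choose j * A ^ j * B ^ (m - (i + 1))) := by
          refine (norm_sum_le _ _).trans (sum_le_sum fun i _ => ?_)
          refine (norm_mul_le _ _).trans (mul_le_mul ((norm_mul_le _ _).trans ?_) (ih _)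
            (norm_nonneg _) (by positivity))
          gcongr
          · simpa using Nat.norm_cast_le (α := 𝔸) (m.choose (i + 1))
          · exact hder i
      _ ≤ ∑ i ∈ range m, (m ! : ℝ) * (m - (i + 1)).choose j * A ^ (j + 1) * B ^ m := by
          refine sum_le_sum fun i hi => ?_
          have hi : i + 1 ≤ m := mem_range.mp hi
          have hfac : (m.choose (i + 1) * i ! * (m - (i + 1))! : ℝ) ≤ m ! := by
            exact_mod_cast choose_succ_mul_factorial_mul_factorial_le hi
          calc _ = (m.choose (i + 1) * i ! * (m - (i + 1))! : ℝ) *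
                ((m - (i + 1)).choose j * A ^ (j + 1) * (B ^ (i + 1) * B ^ (m - (i + 1)))) := by
                ring
            _ ≤ m ! * ((m - (i + 1)).choose j * A ^ (j + 1) * (B ^ (i + 1) * B ^ (m - (i + 1)))) := by
                gcongr
            _ = _ := by rw [← pow_add, Nat.add_sub_cancel' hi]; ring
      _ = _ := by
          rw [← sum_mul, ← sum_mul, ← mul_sum, ← Nat.cast_sum, sum_range_choose_sub_eq_choose_succ]

end

theorem abs_descPochhammer_eval_le_factorial {t : ℝ} (ht : |t| ≤ 1) (n : ℕ) :
    |(descPochhammer ℝ n).eval t| ≤ n ! := by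
  induction n with
  | zero => simp
  | succ n ih =>
    have hn : |t - n| ≤ n + 1 := (abs_sub _ _).trans (by rw [Nat.abs_cast]; linarith)
    rw [descPochhammer_succ_right, eval_mul, eval_sub, eval_X, eval_natCast, abs_mul,
      factorial_succ, Nat.cast_mul, mul_comm]
    push_cast
    exact mul_le_mul hn ih (abs_nonneg _) (by positivity)

theorem abs_descPochhammer_eval_succ_le_factorial {t : ℝ} (h0 : 0 ≤ t) (h1 : t ≤ 1) (n : ℕ) :
    |(descPochhammer ℝ (n + 1)).eval t| ≤ n ! := by
  rw [descPochhammer_succ_left, eval_mul, eval_comp, eval_X, eval_sub, eval_X, eval_one, abs_mul]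
  have ht : |t - 1| ≤ 1 := by rw [abs_le]; constructor <;> linarith
  calc |t| * _ ≤ 1 * n ! := mul_le_mul (by rwa [abs_of_nonneg h0]) 
        (abs_descPochhammer_eval_le_factorial ht n) (abs_nonneg _) zero_le_one
    _ = n ! := one_mul _

theorem abs_iteratedDeriv_succ_rpow_le {r x : ℝ} (h0 : 0 ≤ r) (h1 : r ≤ 1) (hx : 0 < x) (i : ℕ) :
    |iteratedDeriv (i + 1) (fun X : ℝ => X ^ r) x| ≤ i ! * x ^ r * x⁻¹ ^ (i + 1) := by
  rw [iteratedDeriv_eq_iterate, Real.iter_deriv_rpow_const, abs_mul,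
    abs_of_pos (Real.rpow_pos_of_pos hx _), Real.rpow_sub hx, Real.rpow_natCast, div_eq_mul_inv,
    ← inv_pow, ← mul_assoc]
  gcongr
  exact abs_descPochhammer_eval_succ_le_factorial h0 h1 i

theorem factorial_mul_choose_div_factorial_le (n k : ℕ) :
    (n ! * n.choose k / k ! : ℝ) ≤ 2 ^ n * (n : ℝ) ^ ((n : ℝ) - k) := by
  rcases le_or_gt k n with hkn | hnk
  · rw [← Nat.cast_sub hkn, Real.rpow_natCast, div_le_iff₀ (by positivity)]
    have hfac : (n ! : ℝ) ≤ k ! * n ^ (n - k) := by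
      rw [← factorial_mul_descFactorial (Nat.sub_le n k), Nat.sub_sub_self hkn]
      exact_mod_cast Nat.mul_le_mul_left _ (descFactorial_le_pow n (n - k))
    have hchoose : (n.choose k : ℝ) ≤ 2 ^ n := by exact_mod_cast choose_le_two_pow n k
    calc (n ! * n.choose k : ℝ) ≤ (k ! * n ^ (n - k)) * 2 ^ n := by gcongr
      _ = _ := by ring
  · rw [choose_eq_zero_of_lt hnk]
    simp only [Nat.cast_zero, mul_zero, zero_div]
    positivity

theorem rpow_one_div_pow_mul_inv_pow {x p : ℝ} (hx : 0 < x) (hp : p ≠ 0) (k n : ℕ) :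
    (x ^ (1 / p)) ^ k * x⁻¹ ^ n = x ^ (-((p * n - k) / p)) := by
  rw [← Real.rpow_natCast, ← Real.rpow_mul hx.le, inv_pow, ← div_eq_mul_inv (x ^ _),
    ← Real.rpow_natCast x n, ← Real.rpow_sub hx]
  congr 1
  field_simp
  ring

theorem alpha_k_deriv_bound_general (p k : ℕ) (hp : 1 < p)
    (n : ℕ) (x : ℝ) (hx : 0 < x) :
    |iteratedDeriv n
        (fun X : ℝ => (1 / (k.factorial : ℝ)) * (X ^ ((1 : ℝ) / p) - x ^ ((1 : ℝ) / p)) ^ k) x|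
      ≤ (2 * Real.exp 1) ^ n * (n : ℝ) ^ ((n : ℝ) - k)
          * x ^ (-(((p : ℝ) * n - k) / p)) := by
  have hp0 : (0 : ℝ) < p := by exact_mod_cast zero_lt_one.trans hp
  have hr1 : (1 : ℝ) / p ≤ 1 := by
    rw [div_le_one hp0]; exact_mod_cast hp.le
  have hg : ContDiffAt ℝ ∞ (fun X : ℝ => X ^ ((1 : ℝ) / p) - x ^ ((1 : ℝ) / p)) x :=
    (Real.contDiffAt_rpow_const_of_ne hx.ne').sub contDiffAt_const
  have hder (i : ℕ) : ‖iteratedDeriv (i + 1)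
      (fun X : ℝ => X ^ ((1 : ℝ) / p) - x ^ ((1 : ℝ) / p)) x‖ ≤
        i ! * x ^ ((1 : ℝ) / p) * x⁻¹ ^ (i + 1) := by
    rw [iteratedDeriv_fun_sub (Real.contDiffAt_rpow_const_of_ne hx.ne') contDiffAt_const]
    simpa [iteratedDeriv_const] using abs_iteratedDeriv_succ_rpow_le (by positivity) hr1 hx i
  have h2e : (2 : ℝ) ^ n ≤ (2 * Real.exp 1) ^ n := by
    gcongr; linarith [Real.one_le_exp zero_le_one]
  rw [iteratedDeriv_const_mul_field, abs_mul, abs_of_pos (by positivity)]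
  calc _ ≤ 1 / k ! * (n ! * n.choose k * (x ^ ((1 : ℝ) / p)) ^ k * x⁻¹ ^ n) := by
        gcongr
        exact norm_iteratedDeriv_pow_le hg (sub_self _) (by positivity) (by positivity) hder k n
    _ = n ! * n.choose k / k ! * ((x ^ ((1 : ℝ) / p)) ^ k * x⁻¹ ^ n) := by ring
    _ ≤ 2 ^ n * (n : ℝ) ^ ((n : ℝ) - k) * ((x ^ ((1 : ℝ) / p)) ^ k * x⁻¹ ^ n) := by
        gcongr; exact factorial_mul_choose_div_factorial_le n k
    _ ≤ _ := by rw [rpow_one_div_pow_mul_inv_pow hx hp0.ne']; gcongr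

theorem alpha_k_deriv_bound (p k : ℕ) (hp : 1 < p) (hk : 1 ≤ k)
    (n : ℕ) (x : ℝ) (hx : 0 < x) :
    |iteratedDeriv n
        (fun X : ℝ => (1 / (k.factorial : ℝ)) * (X ^ ((1 : ℝ) / p) - x ^ ((1 : ℝ) / p)) ^ k) x|
      ≤ (2 * Real.exp 1) ^ n * (n : ℝ) ^ ((n : ℝ) - k)
          * x ^ (-(((p : ℝ) * n - k) / p)) :=
  alpha_k_deriv_bound_general p k hp n x hx
end

section
/- For every integer k ≥ 1 there exists N_k ∈ ℕ such that the sequence n ↦ (log^{(k)} n)^n, n ≥ N_k, is log-convex, where log^{(k)} is the k-fold iterated logarithm. -/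
/-!
Taking logarithms, log-convexity of `n ↦ (log^[k] n) ^ n` is midpoint convexity of
`g x = x * log^[k+1] x` at the integers. With `Q x = ∏_{i ≤ k} log^[i] x` one has
`(log^[k+1])' = 1 / Q` and `g'' = (2 - x * Q'/Q) / Q`, while `x * Q'/Q = ∑_{i ≤ k} x / ∏_{j ≤ i} log^[j] x`
is at most `∑ 2⁻ⁱ ≤ 2` once all the iterated logarithms are at least `2`. So `g` is convex on a
half-line.
-/

open Real Filter Finset

theorem tendsto_log_iterate_atTop (m : ℕ) : Tendsto log^[m] atTop atTop :=
  tendsto_log_atTop.iterate m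

theorem eventually_two_le_log_iterate (m : ℕ) : ∀ᶠ x in atTop, ∀ i < m, 2 ≤ log^[i] x := by
  filter_upwards [(eventually_all_finset (range m)).2 fun i _ =>
    (tendsto_log_iterate_atTop i).eventually_ge_atTop 2] with x hx i hi
  exact hx i (mem_range.2 hi)

noncomputable def prodLogIterate (m : ℕ) (x : ℝ) : ℝ := ∏ i ∈ range m, log^[i] x

theorem prodLogIterate_succ (m : ℕ) (x : ℝ) :
    prodLogIterate (m + 1) x = prodLogIterate m x * log^[m] x :=
  prod_range_succ _ _

theorem prodLogIterate_ne_zero {m : ℕ} {x : ℝ} (h : ∀ i < m, log^[i] x ≠ 0) :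
    prodLogIterate m x ≠ 0 :=
  prod_ne_zero_iff.2 fun i hi => h i (mem_range.1 hi)

theorem hasDerivAt_log_iterate {m : ℕ} {x : ℝ} (h : ∀ i < m, log^[i] x ≠ 0) :
    HasDerivAt log^[m] (prodLogIterate m x)⁻¹ x := by
  induction m with
  | zero => simpa [prodLogIterate] using hasDerivAt_id x
  | succ m ih =>
    rw [Function.iterate_succ', prodLogIterate_succ, mul_inv, mul_comm]
    exact (hasDerivAt_log (h m m.lt_succ_self)).comp x (ih fun i hi => h i (by omega))

theorem hasDerivAt_prodLogIterate {m : ℕ} {x : ℝ} (h : ∀ i < m, log^[i] x ≠ 0) :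
    HasDerivAt (prodLogIterate m)
      (prodLogIterate m x * ∑ i ∈ range m, (prodLogIterate (i + 1) x)⁻¹) x := by
  induction m with
  | zero =>
    show HasDerivAt (fun y => ∏ i ∈ range 0, log^[i] y) _ x
    simpa using hasDerivAt_const x (1 : ℝ)
  | succ m ih =>
    have h' : ∀ i < m, log^[i] x ≠ 0 := fun i hi => h i (by omega)
    have hQ := prodLogIterate_ne_zero h'
    have hL := h m m.lt_succ_self
    rw [show prodLogIterate (m + 1) = prodLogIterate m * log^[m] from
      funext (prodLogIterate_succ m)]
    refine ((ih h').mul (hasDerivAt_log_iterate h')).congr_deriv ?_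
    rw [sum_range_succ, Pi.mul_apply, prodLogIterate_succ]
    field_simp

theorem two_pow_mul_le_prodLogIterate {m : ℕ} {x : ℝ} (h : ∀ i ≤ m, 2 ≤ log^[i] x) :
    2 ^ m * x ≤ prodLogIterate (m + 1) x := by
  rw [prodLogIterate, prod_range_succ', Function.iterate_zero_apply]
  gcongr
  · exact (zero_lt_two.trans_le (h 0 m.zero_le)).le
  · calc (2 : ℝ) ^ m = ∏ _i ∈ range m, (2 : ℝ) := by rw [prod_const, card_range]
      _ ≤ ∏ i ∈ range m, log^[i + 1] x :=
        prod_le_prod (fun _ _ => zero_le_two) fun i hi => h (i + 1) (mem_range.1 hi)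

theorem mul_sum_inv_prodLogIterate_le_two {m : ℕ} {x : ℝ} (h : ∀ i < m, 2 ≤ log^[i] x) :
    x * ∑ i ∈ range m, (prodLogIterate (i + 1) x)⁻¹ ≤ 2 := by
  rw [mul_sum]
  refine (sum_le_sum fun i hi => ?_).trans (sum_geometric_two_le m)
  have hi : ∀ j ≤ i, 2 ≤ log^[j] x := fun j hj => h j (hj.trans_lt (mem_range.1 hi))
  have hx : 0 < x := zero_lt_two.trans_le (hi 0 i.zero_le)
  calc x * (prodLogIterate (i + 1) x)⁻¹ ≤ x * (2 ^ i * x)⁻¹ := by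
        gcongr; exact two_pow_mul_le_prodLogIterate hi
    _ = (1 / 2) ^ i := by field_simp; rw [← mul_pow]; norm_num

theorem convexOn_Ici_mul_log_iterate {m : ℕ} {a : ℝ}
    (h : ∀ x, a ≤ x → ∀ i < m, 2 ≤ log^[i] x) :
    ConvexOn ℝ (Set.Ici a) fun x => x * log^[m] x := by
  have hne : ∀ x ∈ Set.Ici a, ∀ i < m, log^[i] x ≠ 0 := fun x hx i hi =>
    (zero_lt_two.trans_le (h x hx i hi)).ne'
  have hg' : ∀ x ∈ Set.Ici a, HasDerivAt (fun x => x * log^[m] x)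
      (log^[m] x + x * (prodLogIterate m x)⁻¹) x := fun x hx =>
    ((hasDerivAt_id' x).mul (hasDerivAt_log_iterate (hne x hx))).congr_deriv (by rw [one_mul])
  have hg'' : ∀ x ∈ Set.Ici a, HasDerivAt (fun x => log^[m] x + x * (prodLogIterate m x)⁻¹)
      ((2 - x * ∑ i ∈ range m, (prodLogIterate (i + 1) x)⁻¹) * (prodLogIterate m x)⁻¹) x :=
    fun x hx => by
    have hQ := prodLogIterate_ne_zero (hne x hx)
    refine ((hasDerivAt_log_iterate (hne x hx)).add
      ((hasDerivAt_id' x).mul ((hasDerivAt_prodLogIterate (hne x hx)).inv hQ))).congr_deriv ?_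
    simp only [Pi.inv_apply]
    field_simp
    ring
  refine convexOn_of_hasDerivWithinAt2_nonneg (convex_Ici a)
    (fun x hx => (hg' x hx).continuousAt.continuousWithinAt)
    (fun x hx => (hg' x (interior_subset hx)).hasDerivWithinAt)
    (fun x hx => (hg'' x (interior_subset hx)).hasDerivWithinAt) fun x hx => ?_
  have hx : a ≤ x := interior_subset hx
  have hQ : 0 < prodLogIterate m x :=
    prod_pos fun i hi => zero_lt_two.trans_le (h x hx i (mem_range.1 hi))
  have := mul_sum_inv_prodLogIterate_le_two (h x hx)
  exact mul_nonneg (by linarith) (inv_nonneg.2 hQ.le)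

theorem eventually_convexOn_Ici_mul_log_iterate (m : ℕ) :
    ∀ᶠ a in atTop, ConvexOn ℝ (Set.Ici a) fun x => x * log^[m] x :=
  (eventually_forall_ge_atTop.2 (eventually_two_le_log_iterate m)).mono
    fun _ h => convexOn_Ici_mul_log_iterate h

theorem sq_log_iterate_pow_le_mul {k m : ℕ} (hpos : ∀ x : ℝ, m ≤ x → 0 < log^[k] x)
    (hconv : ConvexOn ℝ (Set.Ici (m : ℝ)) fun x => x * log^[k + 1] x) :
    (log^[k] ((m + 1 : ℕ) : ℝ) ^ (m + 1)) ^ 2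
      ≤ log^[k] (m : ℝ) ^ m * log^[k] ((m + 2 : ℕ) : ℝ) ^ (m + 2) := by
  have hexp : ∀ x : ℝ, m ≤ x → ∀ p : ℕ, log^[k] x ^ p = exp (p * log^[k + 1] x) :=
    fun x hx p => by
    rw [← rpow_natCast, rpow_def_of_pos (hpos x hx), Function.iterate_succ_apply', mul_comm]
  push_cast
  rw [hexp m le_rfl, hexp (m + 1) (by linarith), hexp (m + 2) (by linarith), ← exp_nat_mul,
    ← exp_add, exp_le_exp]
  have hmid := hconv.2 (Set.mem_Ici.2 le_rfl) (Set.mem_Ici.2 (by linarith : (m : ℝ) ≤ m + 2))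
    (by norm_num : (0 : ℝ) ≤ 1 / 2) (by norm_num : (0 : ℝ) ≤ 1 / 2) (by norm_num)
  simp only [smul_eq_mul] at hmid
  rw [show 1 / 2 * (m : ℝ) + 1 / 2 * (m + 2) = m + 1 by ring] at hmid
  push_cast
  linarith

theorem iterated_log_pow_logconvex_general (k : ℕ) :
    ∃ N : ℕ, ∀ n : ℕ, N < n →
      ((Real.log^[k] (n : ℝ)) ^ n) ^ 2
        ≤ (Real.log^[k] ((n - 1 : ℕ) : ℝ)) ^ (n - 1)
            * (Real.log^[k] ((n + 1 : ℕ) : ℝ)) ^ (n + 1) := by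
  have hpos := eventually_forall_ge_atTop.2 ((tendsto_log_iterate_atTop k).eventually_gt_atTop 0)
  obtain ⟨a, ha⟩ :=
    (hpos.and (eventually_convexOn_Ici_mul_log_iterate (k + 1))).exists_forall_of_atTop
  refine ⟨⌈a⌉₊, fun n hn => ?_⟩
  obtain ⟨m, rfl⟩ : ∃ m, n = m + 1 := ⟨n - 1, by omega⟩
  have ham : a ≤ m := Nat.ceil_le.1 (by omega)
  simp only [Nat.add_sub_cancel]
  exact sq_log_iterate_pow_le_mul (ha m ham).1 (ha m ham).2

theorem iterated_log_pow_logconvex (k : ℕ) (hk : 1 ≤ k) :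
    ∃ N : ℕ, ∀ n : ℕ, N < n →
      ((Real.log^[k] (n : ℝ)) ^ n) ^ 2
        ≤ (Real.log^[k] ((n - 1 : ℕ) : ℝ)) ^ (n - 1)
            * (Real.log^[k] ((n + 1 : ℕ) : ℝ)) ^ (n + 1) :=
  iterated_log_pow_logconvex_general k
end
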